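/- For the m × n grid graph G_{m,n} with m, n ≥ 5, the harmonic index of its total graph satisfies H(T(G_{m,n})) = M₁(G_{m,n})/16 + mn/2 + (653/1820)(m + n) − 51739/90090; equivalently, H(T(G_{m,n})) = (3/2)mn − (1879/3640)(m + n) − 3347/45045. -/

import Mathlib

open scoped Classical

/-- The total graph `T(G)` of a simple graph `G`: its vertex set is `V(G) ∪ E(G)`,
and two vertices of `T(G)` are adjacent iff the corresponding elements of `G`
are adjacent vertices, adjacent (distinct, sharing an endpoint) edges, or an
incident vertex–edge pair. -/
def SimpleGraph.totalGraph {V : Type*} (G : SimpleGraph V) :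
    SimpleGraph (V ⊕ G.edgeSet) where
  Adj x y :=
    match x, y with
    | Sum.inl u, Sum.inl v => G.Adj u v
    | Sum.inl u, Sum.inr e => u ∈ (e : Sym2 V)
    | Sum.inr e, Sum.inl u => u ∈ (e : Sym2 V)
    | Sum.inr e, Sum.inr f => e ≠ f ∧ ∃ v, v ∈ (e : Sym2 V) ∧ v ∈ (f : Sym2 V)
  symm := ⟨by
    rintro (u | e) (v | f) h
    · exact h.symm
    · exact h
    · exact h
    · exact ⟨h.1.symm, h.2.imp fun v hv => ⟨hv.2, hv.1⟩⟩⟩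
  loopless := ⟨by
    rintro (u | e) h
    · exact G.irrefl h
    · exact h.1 rfl⟩

/-- The harmonic index `H(G) = ∑_{uv ∈ E(G)} 2 / (deg u + deg v)`. -/
noncomputable def SimpleGraph.harmonicIndex {V : Type*} [Fintype V] (G : SimpleGraph V) : ℝ :=
  ∑ e ∈ G.edgeFinset,
    Sym2.lift ⟨fun u v => 2 / ((G.degree u : ℝ) + (G.degree v : ℝ)),
      fun u v => by simp [add_comm]⟩ e

/-!
Every edge of `T(G)` is charged to a vertex `v` of `G`: an edge `uv` of `G` half to each end, an
incidence `(v, vu)` to `v`, and a pair of edges `vu`, `vw` to their common vertex `v`. As `T(G)` has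
degree `2 d(v)` at a vertex and `d(u) + d(v)` at an edge `uv`, this gives
`H(T(G)) = ∑_v (∑_{u ∼ v} 2 / (3 d(v) + d(u)) + ∑_{u, w ∼ v} 1 / (2 d(v) + d(u) + d(w)))`,
the diagonal terms `u = w` of the double sum being the edges `uv` of `G`. So `H(T(G))` only depends
on the degree of each vertex together with the multiset of the degrees of its neighbours. In
`P_m □ P_n` this datum is determined by the kinds of the two coordinates of a vertex (an end of the
path, a neighbour of an end, or an interior vertex: `2`, `2` and `m - 4` of them), and summing the
nine resulting values gives the formula. `M₁` is computed in the same way.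
-/

open Finset

namespace SimpleGraph

section harmonicIndex

variable {V : Type*} [Fintype V] (G : SimpleGraph V)

theorem two_nsmul_sum_edgeFinset_eq_sum_neighborFinset {M : Type*} [AddCommMonoid M]
    (f : Sym2 V → M) :
    2 • ∑ e ∈ G.edgeFinset, f e = ∑ v, ∑ u ∈ G.neighborFinset v, f s(v, u) := by
  classical
  have hfst : ∑ d : G.Dart, f d.edge = ∑ v, ∑ u ∈ G.neighborFinset v, f s(v, u) := by
    rw [← sum_fiberwise_of_maps_to (g := fun d : G.Dart => d.fst) (t := univ) (by simp)]
    refine sum_congr rfl fun v _ => ?_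
    have hfiber : ({d : G.Dart | d.fst = v} : Finset _) = univ.image (G.dartOfNeighborSet v) :=
      G.dart_fst_fiber v
    rw [hfiber, sum_image fun _ _ _ _ h => G.dartOfNeighborSet_injective v h]
    exact (sum_subtype _ (fun u => G.mem_neighborFinset v u) fun u => f s(v, u)).symm
  have hedge : ∑ d : G.Dart, f d.edge = 2 • ∑ e ∈ G.edgeFinset, f e := by
    rw [← sum_fiberwise_of_maps_to (g := Dart.edge) (t := G.edgeFinset) (by simp), smul_sum]
    refine sum_congr rfl fun e he => ?_
    rw [sum_congr rfl fun d hd => by rw [(mem_filter.mp hd).2], sum_const,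
      G.dart_edge_fiber_card e (mem_edgeFinset.mp he)]
  rw [← hfst, hedge]

theorem harmonicIndex_eq_sum_sum_neighborFinset :
    G.harmonicIndex =
      ∑ v, ∑ u ∈ G.neighborFinset v, 1 / ((G.degree v : ℝ) + G.degree u) := by
  have h := G.two_nsmul_sum_edgeFinset_eq_sum_neighborFinset
    (Sym2.lift ⟨fun u v => 2 / ((G.degree u : ℝ) + G.degree v), fun u v => by simp [add_comm]⟩)
  have htwo : ∑ v, ∑ u ∈ G.neighborFinset v, 2 / ((G.degree v : ℝ) + G.degree u) =
      2 * ∑ v, ∑ u ∈ G.neighborFinset v, 1 / ((G.degree v : ℝ) + G.degree u) := by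
    simp only [mul_sum, mul_one_div]
  simp only [Sym2.lift_mk, nsmul_eq_mul, Nat.cast_ofNat, htwo] at h
  rw [harmonicIndex]
  linarith

theorem sum_neighborFinset_eq_sum_ite {M : Type*} [AddCommMonoid M] (v : V) (f : V → M) :
    ∑ u ∈ G.neighborFinset v, f u = ∑ u, if G.Adj v u then f u else 0 := by
  rw [neighborFinset_eq_filter, sum_filter]

end harmonicIndex

section totalGraph

variable {V : Type*} (G : SimpleGraph V)

@[simp] theorem totalGraph_adj_inl_inl {u v : V} :
    G.totalGraph.Adj (.inl u) (.inl v) ↔ G.Adj u v := Iff.rfl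

@[simp] theorem totalGraph_adj_inl_inr {u : V} {e : G.edgeSet} :
    G.totalGraph.Adj (.inl u) (.inr e) ↔ u ∈ (e : Sym2 V) := Iff.rfl

@[simp] theorem totalGraph_adj_inr_inl {u : V} {e : G.edgeSet} :
    G.totalGraph.Adj (.inr e) (.inl u) ↔ u ∈ (e : Sym2 V) := Iff.rfl

@[simp] theorem totalGraph_adj_inr_inr {e f : G.edgeSet} :
    G.totalGraph.Adj (.inr e) (.inr f) ↔
      (e : Sym2 V) ≠ f ∧ ∃ v, v ∈ (e : Sym2 V) ∧ v ∈ (f : Sym2 V) := by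
  rw [← Subtype.ext_iff.ne]; rfl

variable [Fintype V]

theorem filter_mem_edgeFinset_eq_image (v : V) :
    {e ∈ G.edgeFinset | v ∈ e} = (G.neighborFinset v).image (s(v, ·)) := by
  ext e
  simp only [mem_filter, mem_edgeFinset, mem_image, mem_neighborFinset]
  constructor
  · induction e with
    | _ a b =>
      rintro ⟨hab, hv⟩
      rcases Sym2.mem_iff.mp hv with rfl | rfl
      · exact ⟨b, hab, rfl⟩
      · exact ⟨a, hab.symm, Sym2.eq_swap⟩
  · rintro ⟨u, hu, rfl⟩
    exact ⟨hu, Sym2.mem_mk_left v u⟩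

theorem sum_edgeSet_ite_mem {M : Type*} [AddCommMonoid M] (v : V) (f : Sym2 V → M) :
    ∑ e : G.edgeSet, (if v ∈ (e : Sym2 V) then f e else 0) =
      ∑ u ∈ G.neighborFinset v, f s(v, u) := by
  rw [← sum_subtype G.edgeFinset (fun _ => mem_edgeFinset) fun e => if v ∈ e then f e else 0,
    ← sum_filter, filter_mem_edgeFinset_eq_image,
    sum_image fun _ _ _ _ h => Sym2.congr_right.mp h]

theorem sum_sum_edgeSet_ite_mem {M : Type*} [AddCommMonoid M] (φ : V → Sym2 V → M) :
    ∑ v, ∑ e : G.edgeSet, (if v ∈ (e : Sym2 V) then φ v e else 0) =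
      ∑ v, ∑ u ∈ G.neighborFinset v, φ v s(v, u) :=
  sum_congr rfl fun v _ => G.sum_edgeSet_ite_mem v (φ v)

theorem sum_edgeSet_sum_ite_mem {M : Type*} [AddCommMonoid M] (φ : V → Sym2 V → M) :
    ∑ e : G.edgeSet, ∑ v, (if v ∈ (e : Sym2 V) then φ v e else 0) =
      ∑ v, ∑ u ∈ G.neighborFinset v, φ v s(v, u) := by
  rw [sum_comm, sum_sum_edgeSet_ite_mem]

theorem ite_exists_mem_mem_eq_sum {M : Type*} [AddCommMonoid M] {e f : Sym2 V} (hef : e ≠ f)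
    (c : M) :
    (if ∃ v, v ∈ e ∧ v ∈ f then c else 0) = ∑ v, if v ∈ e ∧ v ∈ f then c else 0 := by
  split_ifs with h
  · obtain ⟨v, hve, hvf⟩ := h
    rw [sum_eq_single v (fun w _ hwv => if_neg fun hw => hwv ?_) (by simp), if_pos ⟨hve, hvf⟩]
    by_contra hne
    exact hef (Sym2.eq_of_ne_mem hne hw.1 hve hw.2 hvf)
  · exact (sum_eq_zero fun v _ => if_neg fun hv => h ⟨v, hv⟩).symm

theorem sum_edgeSet_ite_adj {M : Type*} [AddCommMonoid M] (e : Sym2 V) (g : Sym2 V → M) :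
    ∑ f : G.edgeSet, (if e ≠ f ∧ ∃ v, v ∈ e ∧ v ∈ (f : Sym2 V) then g f else 0) =
      ∑ v, if v ∈ e then ∑ u ∈ G.neighborFinset v, (if e ≠ s(v, u) then g s(v, u) else 0)
        else 0 := by
  calc _ = ∑ f : G.edgeSet, ∑ v, if v ∈ e then
          (if v ∈ (f : Sym2 V) then (if e ≠ f then g f else 0) else 0) else 0 := by
        refine sum_congr rfl fun f _ => ?_
        by_cases hef : e = f
        · simp [hef]
        · simp only [hef, ne_eq, not_false_eq_true, true_and, ite_exists_mem_mem_eq_sum hef,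
            if_true, ite_and]
    _ = _ := by
        rw [sum_comm]
        refine sum_congr rfl fun v _ => ?_
        split_ifs
        · exact G.sum_edgeSet_ite_mem v fun f => if e ≠ f then g f else 0
        · simp

theorem sum_edgeSet_sum_edgeSet_ite_adj {M : Type*} [AddCommMonoid M]
    (ψ : Sym2 V → Sym2 V → M) :
    ∑ e : G.edgeSet, ∑ f : G.edgeSet,
        (if (e : Sym2 V) ≠ f ∧ ∃ v, v ∈ (e : Sym2 V) ∧ v ∈ (f : Sym2 V) then ψ e f
          else 0) =
      ∑ v, ∑ u ∈ G.neighborFinset v, ∑ w ∈ G.neighborFinset v,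
        (if u ≠ w then ψ s(v, u) s(v, w) else 0) := by
  simp only [G.sum_edgeSet_ite_adj]
  rw [G.sum_edgeSet_sum_ite_mem fun v e =>
    ∑ w ∈ G.neighborFinset v, if e ≠ s(v, w) then ψ e s(v, w) else 0]
  simp only [ne_eq, Sym2.congr_right]

theorem sum_ite_mem_mk {M : Type*} [AddCommMonoid M] {a b : V} (hab : a ≠ b) (φ : V → M) :
    ∑ v, (if v ∈ s(a, b) then φ v else 0) = φ a + φ b := by
  have hmem : ∀ v, v ∈ s(a, b) ↔ v ∈ ({a, b} : Finset V) := by simp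
  simp only [hmem, sum_ite_mem, univ_inter, sum_pair hab]

noncomputable def endpointDegreeSum : Sym2 V → ℕ :=
  Sym2.lift ⟨fun u v => G.degree u + G.degree v, fun _ _ => add_comm _ _⟩

@[simp] theorem endpointDegreeSum_mk (u v : V) :
    G.endpointDegreeSum s(u, v) = G.degree u + G.degree v := rfl

theorem degree_totalGraph_inl (v : V) : G.totalGraph.degree (.inl v) = 2 * G.degree v := by
  rw [← card_neighborFinset_eq_degree, card_eq_sum_ones,
    sum_neighborFinset_eq_sum_ite, Fintype.sum_sum_type]
  simp only [totalGraph_adj_inl_inl, totalGraph_adj_inl_inr, G.sum_edgeSet_ite_mem v fun _ => 1,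
    ← sum_neighborFinset_eq_sum_ite, sum_const, card_neighborFinset_eq_degree, smul_eq_mul,
    mul_one]
  ring

theorem sum_neighborFinset_ite_mk_ne_add_one {a b : V} (h : G.Adj a b) :
    ∑ u ∈ G.neighborFinset a, (if s(a, b) ≠ s(a, u) then 1 else 0) + 1 = G.degree a := by
  have hne : ∀ u, s(a, b) ≠ s(a, u) ↔ b ≠ u := fun _ => Sym2.congr_right.not
  simp only [hne, sum_boole, filter_ne, Nat.cast_id,
    card_erase_add_one ((G.mem_neighborFinset a b).mpr h), card_neighborFinset_eq_degree]

theorem degree_totalGraph_inr (e : G.edgeSet) :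
    G.totalGraph.degree (.inr e) = G.endpointDegreeSum e := by
  obtain ⟨e, he⟩ := e
  induction e with
  | _ a b =>
    replace he : G.Adj a b := he
    have hab : a ≠ b := G.ne_of_adj he
    rw [← card_neighborFinset_eq_degree, card_eq_sum_ones,
      sum_neighborFinset_eq_sum_ite, Fintype.sum_sum_type]
    simp only [totalGraph_adj_inr_inl, totalGraph_adj_inr_inr, G.sum_edgeSet_ite_adj _ fun _ => 1,
      sum_ite_mem_mk hab]
    have ha := G.sum_neighborFinset_ite_mk_ne_add_one he
    have hb := G.sum_neighborFinset_ite_mk_ne_add_one he.symm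
    rw [Sym2.eq_swap (a := b)] at hb
    simp only [endpointDegreeSum_mk]
    omega

theorem harmonicIndex_totalGraph :
    G.totalGraph.harmonicIndex = ∑ v,
      (∑ u ∈ G.neighborFinset v, 2 / (3 * (G.degree v : ℝ) + G.degree u) +
        ∑ u ∈ G.neighborFinset v, ∑ w ∈ G.neighborFinset v,
          1 / (2 * (G.degree v : ℝ) + G.degree u + G.degree w)) := by
  rw [harmonicIndex_eq_sum_sum_neighborFinset, Fintype.sum_sum_type]
  simp only [sum_neighborFinset_eq_sum_ite G.totalGraph, Fintype.sum_sum_type, sum_add_distrib,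
    totalGraph_adj_inl_inl, totalGraph_adj_inl_inr, totalGraph_adj_inr_inl, totalGraph_adj_inr_inr,
    degree_totalGraph_inl, degree_totalGraph_inr]
  push_cast
  rw [G.sum_sum_edgeSet_ite_mem fun v e => 1 / (2 * (G.degree v : ℝ) + G.endpointDegreeSum e),
    G.sum_edgeSet_sum_ite_mem fun v e => 1 / ((G.endpointDegreeSum e : ℝ) + 2 * G.degree v),
    G.sum_edgeSet_sum_edgeSet_ite_adj fun e f =>
      1 / ((G.endpointDegreeSum e : ℝ) + G.endpointDegreeSum f)]
  simp only [← sum_neighborFinset_eq_sum_ite G, endpointDegreeSum_mk, ← sum_add_distrib]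
  push_cast
  refine sum_congr rfl fun v _ => sum_congr rfl fun u hu => ?_
  have hpair : ∀ w : V, (G.degree v + G.degree u : ℝ) + (G.degree v + G.degree w) =
      2 * G.degree v + G.degree u + G.degree w := fun w => by ring
  -- the vertex–vertex term is the missing diagonal term `w = u` of the edge–edge sum
  rw [← sum_filter, filter_ne, ← add_sum_erase _ _ hu]
  simp only [hpair]
  ring

end totalGraph

section degreeProfile

variable {V : Type*} [Fintype V]

noncomputable def degreeProfile (G : SimpleGraph V) (v : V) :
    ℕ × Multiset ℕ :=
  (G.degree v, (G.neighborFinset v).val.map fun u => G.degree u)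

noncomputable def totalGraphWeight (p : ℕ × Multiset ℕ) : ℝ :=
  (p.2.map fun a => 2 / (3 * (p.1 : ℝ) + a)).sum +
    (p.2.map fun a => (p.2.map fun b => 1 / (2 * (p.1 : ℝ) + a + b)).sum).sum

theorem harmonicIndex_totalGraph_eq_sum_totalGraphWeight (G : SimpleGraph V) :
    G.totalGraph.harmonicIndex = ∑ v, totalGraphWeight (G.degreeProfile v) := by
  simp [harmonicIndex_totalGraph, totalGraphWeight, degreeProfile, Multiset.map_map, sum_map_val]

def boxProdProfile (p q : ℕ × Multiset ℕ) : ℕ × Multiset ℕ :=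
  (p.1 + q.1, p.2.map (· + q.1) + q.2.map (p.1 + ·))

theorem degreeProfile_of_neighborFinset_eq_singleton {G : SimpleGraph V} {v u : V}
    (h : G.neighborFinset v = {u}) :
    G.degreeProfile v = (1, {G.degree u}) := by
  rw [degreeProfile, ← card_neighborFinset_eq_degree, h, card_singleton, singleton_val,
    Multiset.map_singleton]

theorem degreeProfile_of_neighborFinset_eq_pair [DecidableEq V] {G : SimpleGraph V} {v u w : V}
    (huw : u ≠ w) (h : G.neighborFinset v = {u, w}) :
    G.degreeProfile v = (2, {G.degree u, G.degree w}) := by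
  rw [degreeProfile, ← card_neighborFinset_eq_degree, h, card_pair huw,
    insert_val_of_notMem (by simpa using huw), singleton_val, Multiset.map_cons,
    Multiset.map_singleton]
  rfl

theorem degreeProfile_boxProd {α β : Type*} [Fintype α] [Fintype β] (G : SimpleGraph α)
    (H : SimpleGraph β) (x : α × β) :
    (G □ H).degreeProfile x = boxProdProfile (G.degreeProfile x.1) (H.degreeProfile x.2) := by
  simp only [degreeProfile, boxProdProfile, neighborFinset_boxProd, degree_boxProd, disjUnion,
    product_singleton, singleton_product, map_val, Multiset.map_add, Multiset.map_map]
  rfl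

end degreeProfile

section pathGraph

variable {m n : ℕ}

theorem neighborFinset_pathGraph_zero (hm : 1 < m) :
    (pathGraph m).neighborFinset ⟨0, by omega⟩ = {⟨1, hm⟩} := by
  ext ⟨j, hj⟩
  simp only [mem_neighborFinset, pathGraph_adj, mem_singleton, Fin.ext_iff]
  omega

theorem neighborFinset_pathGraph_last (hm : 1 < m) :
    (pathGraph m).neighborFinset ⟨m - 1, by omega⟩ = {⟨m - 2, by omega⟩} := by
  ext ⟨j, hj⟩
  simp only [mem_neighborFinset, pathGraph_adj, mem_singleton, Fin.ext_iff]
  omega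

theorem neighborFinset_pathGraph_of_pos {k : ℕ} (h0 : 0 < k) (hk : k + 1 < m) :
    (pathGraph m).neighborFinset ⟨k, by omega⟩ = {⟨k - 1, by omega⟩, ⟨k + 1, hk⟩} := by
  ext ⟨j, hj⟩
  simp only [mem_neighborFinset, pathGraph_adj, mem_insert, mem_singleton, Fin.ext_iff]
  omega

theorem degree_pathGraph (hm : 1 < m) (i : Fin m) :
    (pathGraph m).degree i = if (i : ℕ) = 0 ∨ (i : ℕ) = m - 1 then 1 else 2 := by
  obtain ⟨k, hk⟩ := i
  rw [← card_neighborFinset_eq_degree]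
  rcases (show k = 0 ∨ k = m - 1 ∨ (0 < k ∧ k + 1 < m) by omega) with rfl | rfl | ⟨h0, h1⟩
  · simp [neighborFinset_pathGraph_zero hm]
  · simp [neighborFinset_pathGraph_last hm]
  · rw [neighborFinset_pathGraph_of_pos h0 h1, card_pair (by simp [Fin.ext_iff]),
      if_neg (by simp only; omega)]

def pathProfile (m k : ℕ) : ℕ × Multiset ℕ :=
  if k = 0 ∨ k = m - 1 then (1, {2}) else if k = 1 ∨ k = m - 2 then (2, {1, 2}) else (2, {2, 2})

theorem degreeProfile_pathGraph (hm : 5 ≤ m) (i : Fin m) :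
    (pathGraph m).degreeProfile i = pathProfile m i := by
  obtain ⟨k, hk⟩ := i
  have hm1 : 1 < m := by omega
  rcases (show k = 0 ∨ k = m - 1 ∨ (0 < k ∧ k + 1 < m) by omega) with rfl | rfl | ⟨h0, h1⟩
  · rw [degreeProfile_of_neighborFinset_eq_singleton (neighborFinset_pathGraph_zero hm1)]
    simp (disch := omega) only [degree_pathGraph hm1, pathProfile, if_neg, true_or, if_true]
  · rw [degreeProfile_of_neighborFinset_eq_singleton (neighborFinset_pathGraph_last hm1)]
    simp (disch := omega) only [degree_pathGraph hm1, pathProfile, if_neg, or_true, if_true]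
  · have hne : (⟨k - 1, by omega⟩ : Fin m) ≠ ⟨k + 1, h1⟩ := by
      simp only [ne_eq, Fin.mk.injEq]
      omega
    rw [degreeProfile_of_neighborFinset_eq_pair hne (neighborFinset_pathGraph_of_pos h0 h1)]
    rcases (show k = 1 ∨ k = m - 2 ∨ (1 < k ∧ k + 2 < m) by omega)
      with rfl | rfl | ⟨h2, h3⟩
    · simp (disch := omega) only [degree_pathGraph hm1, pathProfile, if_neg, true_or, if_true]
    · simp (disch := omega) only [degree_pathGraph hm1, pathProfile, if_pos, if_neg, or_true,
        if_true]
      exact congrArg _ (Multiset.pair_comm 2 1)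
    · simp (disch := omega) only [degree_pathGraph hm1, pathProfile, if_neg]

def pathProfileSum {M : Type*} [AddCommMonoid M] (m : ℕ) (F : ℕ × Multiset ℕ → M) : M :=
  2 • F (1, {2}) + 2 • F (2, {1, 2}) + (m - 4) • F (2, {2, 2})

theorem sum_degreeProfile_pathGraph {M : Type*} [AddCommMonoid M] (hm : 5 ≤ m)
    (F : ℕ × Multiset ℕ → M) :
    ∑ i : Fin m, F ((pathGraph m).degreeProfile i) = pathProfileSum m F := by
  obtain ⟨a, rfl⟩ : ∃ a, m = a + 5 := ⟨m - 5, by omega⟩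
  simp only [degreeProfile_pathGraph hm]
  rw [Fin.sum_univ_eq_sum_range (fun k => F (pathProfile (a + 5) k)), sum_range_succ,
    sum_range_succ, sum_range_succ', sum_range_succ']
  have hmid : ∀ k ∈ range (a + 1), F (pathProfile (a + 5) (k + 1 + 1)) = F (2, {2, 2}) :=
    fun k hk => by
      rw [mem_range] at hk
      rw [pathProfile, if_neg (by omega), if_neg (by omega)]
  rw [sum_congr rfl hmid, sum_const, card_range]
  simp (disch := omega) only [pathProfile, if_pos, if_neg, true_or, if_true]
  rw [pathProfileSum, show a + 5 - 4 = a + 1 by omega]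
  abel

theorem sum_degreeProfile_boxProd_pathGraph {M : Type*} [AddCommMonoid M] (hm : 5 ≤ m)
    (hn : 5 ≤ n) (F : ℕ × Multiset ℕ → M) :
    ∑ x : Fin m × Fin n, F ((pathGraph m □ pathGraph n).degreeProfile x) =
      pathProfileSum m fun p => pathProfileSum n fun q => F (boxProdProfile p q) := by
  simp only [degreeProfile_boxProd, Fintype.sum_prod_type]
  rw [sum_congr rfl fun i _ =>
    sum_degreeProfile_pathGraph hn fun q => F (boxProdProfile ((pathGraph m).degreeProfile i) q)]
  exact sum_degreeProfile_pathGraph hm fun p => pathProfileSum n fun q => F (boxProdProfile p q)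

theorem harmonicIndex_totalGraph_boxProd_pathGraph (hm : 5 ≤ m) (hn : 5 ≤ n) :
    (pathGraph m □ pathGraph n).totalGraph.harmonicIndex =
      (3 / 2) * (m : ℝ) * (n : ℝ) - (1879 / 3640) * ((m : ℝ) + (n : ℝ)) - 3347 / 45045 := by
  rw [harmonicIndex_totalGraph_eq_sum_totalGraphWeight,
    sum_degreeProfile_boxProd_pathGraph hm hn totalGraphWeight]
  simp only [pathProfileSum, boxProdProfile, totalGraphWeight, nsmul_eq_mul,
    Nat.cast_sub (show 4 ≤ m by omega), Nat.cast_sub (show 4 ≤ n by omega)]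
  norm_num
  ring

theorem sum_degree_sq_boxProd_pathGraph (hm : 5 ≤ m) (hn : 5 ≤ n) :
    ∑ v : Fin m × Fin n, ((pathGraph m □ pathGraph n).degree v : ℝ) ^ 2 =
      16 * (m : ℝ) * n - 14 * ((m : ℝ) + n) + 8 := by
  have h := sum_degreeProfile_boxProd_pathGraph hm hn fun p => (p.1 : ℝ) ^ 2
  simp only [degreeProfile, degree_boxProd] at h
  simp only [degree_boxProd, h, pathProfileSum, boxProdProfile, nsmul_eq_mul,
    Nat.cast_sub (show 4 ≤ m by omega), Nat.cast_sub (show 4 ≤ n by omega)]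
  norm_num
  ring

end pathGraph

end SimpleGraph

/-- For the `m × n` grid graph `G_{m,n} = P_m □ P_n` with `m, n ≥ 5`,
`H(T(G_{m,n})) = M₁(G_{m,n})/16 + mn/2 + (653/1820)(m + n) - 51739/90090`; equivalently,
`H(T(G_{m,n})) = (3/2)mn - (1879/3640)(m + n) - 3347/45045`. -/
theorem harmonicIndex_totalGraph_gridGraph (m n : ℕ) (hm : 5 ≤ m) (hn : 5 ≤ n) :
    ((SimpleGraph.pathGraph m).boxProd
        (SimpleGraph.pathGraph n)).totalGraph.harmonicIndex
      = (∑ v : Fin m × Fin n,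
          (((SimpleGraph.pathGraph m).boxProd (SimpleGraph.pathGraph n)).degree v : ℝ) ^ 2)
            / 16
        + (m : ℝ) * (n : ℝ) / 2 + (653 / 1820) * ((m : ℝ) + (n : ℝ)) - 51739 / 90090 ∧
    ((SimpleGraph.pathGraph m).boxProd
        (SimpleGraph.pathGraph n)).totalGraph.harmonicIndex
      = (3 / 2) * (m : ℝ) * (n : ℝ) - (1879 / 3640) * ((m : ℝ) + (n : ℝ))
        - 3347 / 45045 := by
  have hH := SimpleGraph.harmonicIndex_totalGraph_boxProd_pathGraph hm hn
  refine ⟨?_, hH⟩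
  rw [hH, SimpleGraph.sum_degree_sq_boxProd_pathGraph hm hn]
  ring
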